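/- Let n ≥ 3 and assume [n]_q ≠ 0. The vector s¹_{ω_1+ω_{n−1}} = Σ_{k=2}^{n−1} q^{k−2}·g_{1,k} ⊗ g_{k,n} + q^{−2}·Σ_{k=1}^{n−1} ([n−k]_q/[n]_q)·t_k ⊗ g_{1,n} − q^{n−2}·Σ_{k=1}^{n−1} ([k]_q/[n]_q)·g_{1,n} ⊗ t_k in W ⊗ W satisfies Ê_i(s¹_{ω_1+ω_{n−1}}) = 0 for every 1 ≤ i ≤ n−1; i.e. it is a highest weight vector of the U_q(sl(n))-module W ⊗ W (of highest weight ω_1+ω_{n−1}). -/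

import Mathlib

noncomputable section

/-- Index set for the basis `{g_{k,l} : 1 ≤ k, l ≤ n, k ≠ l} ∪ {t_k : 1 ≤ k ≤ n−1}`
of `g_q` (the `q`-analogue of the adjoint representation of `sl(n)`). -/
abbrev WIdx (n : ℕ) := {p : Fin n × Fin n // p.1 ≠ p.2} ⊕ Fin (n - 1)

/-- The free `K`-module `W = g_q` with the above basis. -/
abbrev WMod (n : ℕ) (K : Type*) [Field K] := WIdx n →₀ K

/-- The basis vector `g_{k,l}` (for 1-based indices `1 ≤ k, l ≤ n`, `k ≠ l`;
junk value `0` otherwise). -/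
def gW (n : ℕ) (K : Type*) [Field K] (k l : ℕ) : WMod n K :=
  if h : 1 ≤ k ∧ 1 ≤ l ∧ k ≠ l ∧ k - 1 < n ∧ l - 1 < n then
    Finsupp.single
      (Sum.inl ⟨(⟨k - 1, h.2.2.2.1⟩, ⟨l - 1, h.2.2.2.2⟩), by intro hc; simp at hc; omega⟩) 1
  else 0

/-- The basis vector `t_k` (for 1-based `1 ≤ k ≤ n−1`; junk value `0` otherwise). -/
def tW (n : ℕ) (K : Type*) [Field K] (k : ℕ) : WMod n K :=
  if h : 1 ≤ k ∧ k - 1 < n - 1 then Finsupp.single (Sum.inr ⟨k - 1, h.2⟩) 1 else 0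

/-- The weight `λ_i` of a basis vector of `W`:
`λ_i(g_{k,l}) = δ_{i,k} − δ_{i,l} − δ_{i+1,k} + δ_{i+1,l}`, `λ_i(t_k) = 0`. -/
def lamW (n : ℕ) (i : ℕ) : WIdx n → ℤ
  | Sum.inl p =>
      (if (p.1.1 : ℕ) + 1 = i then 1 else 0) - (if (p.1.2 : ℕ) + 1 = i then 1 else 0) -
        (if (p.1.1 : ℕ) + 1 = i + 1 then 1 else 0) + (if (p.1.2 : ℕ) + 1 = i + 1 then 1 else 0)
  | Sum.inr _ => 0

/-- The action of `ad e_i` on the basis of `W`: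
`g_{a,i} ↦ −g_{a,i+1}` and `g_{i+1,a} ↦ g_{i,a}` for `a ∉ {i, i+1}`,
`g_{i+1,i} ↦ t_i`, `t_i ↦ −[2]_q g_{i,i+1}`, `t_{i±1} ↦ g_{i,i+1}`,
and every other basis vector to `0`. -/
def adeB (n : ℕ) (K : Type*) [Field K] (q : K) (i : ℕ) : WIdx n → WMod n K
  | Sum.inl p =>
      if (p.1.2 : ℕ) + 1 = i ∧ (p.1.1 : ℕ) + 1 ≠ i ∧ (p.1.1 : ℕ) + 1 ≠ i + 1 then
        -gW n K ((p.1.1 : ℕ) + 1) (i + 1)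
      else if (p.1.1 : ℕ) + 1 = i + 1 ∧ (p.1.2 : ℕ) + 1 ≠ i ∧ (p.1.2 : ℕ) + 1 ≠ i + 1 then
        gW n K i ((p.1.2 : ℕ) + 1)
      else if (p.1.1 : ℕ) + 1 = i + 1 ∧ (p.1.2 : ℕ) + 1 = i then tW n K i
      else 0
  | Sum.inr k =>
      if (k : ℕ) + 1 = i then -((q + q⁻¹) • gW n K i (i + 1))
      else if (k : ℕ) + 1 + 1 = i ∨ (k : ℕ) + 1 = i + 1 then gW n K i (i + 1)
      else 0

/-- The operator `ad e_i` on `W`. -/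
def adeW (n : ℕ) (K : Type*) [Field K] (q : K) (i : ℕ) : Module.End K (WMod n K) :=
  Finsupp.lift (WMod n K) K (WIdx n) (adeB n K q i)

/-- The action of `ad f_i` on the basis of `W`:
`g_{a,i+1} ↦ −g_{a,i}` and `g_{i,a} ↦ g_{i+1,a}` for `a ∉ {i, i+1}`,
`g_{i,i+1} ↦ −t_i`, `t_i ↦ [2]_q g_{i+1,i}`, `t_{i±1} ↦ −g_{i+1,i}`,
and every other basis vector to `0`. -/
def adfB (n : ℕ) (K : Type*) [Field K] (q : K) (i : ℕ) : WIdx n → WMod n K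
  | Sum.inl p =>
      if (p.1.2 : ℕ) + 1 = i + 1 ∧ (p.1.1 : ℕ) + 1 ≠ i ∧ (p.1.1 : ℕ) + 1 ≠ i + 1 then
        -gW n K ((p.1.1 : ℕ) + 1) i
      else if (p.1.1 : ℕ) + 1 = i ∧ (p.1.2 : ℕ) + 1 ≠ i ∧ (p.1.2 : ℕ) + 1 ≠ i + 1 then
        gW n K (i + 1) ((p.1.2 : ℕ) + 1)
      else if (p.1.1 : ℕ) + 1 = i ∧ (p.1.2 : ℕ) + 1 = i + 1 then -tW n K i
      else 0
  | Sum.inr k =>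
      if (k : ℕ) + 1 = i then (q + q⁻¹) • gW n K (i + 1) i
      else if (k : ℕ) + 1 + 1 = i ∨ (k : ℕ) + 1 = i + 1 then -gW n K (i + 1) i
      else 0

/-- The operator `ad f_i` on `W`. -/
def adfW (n : ℕ) (K : Type*) [Field K] (q : K) (i : ℕ) : Module.End K (WMod n K) :=
  Finsupp.lift (WMod n K) K (WIdx n) (adfB n K q i)

/-- The operator `ad h_i` on `W`, multiplying each basis vector `w` by `λ_i(w)`. -/
def adhW (n : ℕ) (K : Type*) [Field K] (i : ℕ) : Module.End K (WMod n K) :=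
  Finsupp.lift (WMod n K) K (WIdx n) fun w => ((lamW n i w : ℤ) : K) • Finsupp.single w 1

open scoped TensorProduct

/-- Shortcut instance (the canonical zero of the tensor product); this avoids a
typeclass-search explosion for `Zero` on tensor products of `Finsupp`s. -/
noncomputable instance instZeroTPFinsupp (K : Type*) [Field K] (X : Type*) :
    Zero (TensorProduct K (X →₀ K) (X →₀ K)) := AddMonoid.toZero

open scoped TensorProduct

/-- The action `Ê_i` of the Chevalley generator `e_i` of `U_q(sl(n))` on `W ⊗ W`
via the coproduct `Δe_i = e_i ⊗ 1 + q^{−h_i} ⊗ e_i`: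
`Ê_i(x ⊗ y) = (ad e_i x) ⊗ y + q^{−λ_i(x)}·x ⊗ (ad e_i y)` on basis vectors. -/
def Ehat (n : ℕ) (K : Type*) [Field K] (q : K) (i : ℕ) :
    Module.End K (WMod n K ⊗[K] WMod n K) :=
  TensorProduct.map (adeW n K q i) LinearMap.id +
    TensorProduct.map
      (Finsupp.lift (WMod n K) K (WIdx n) fun w => q ^ (-lamW n i w) • Finsupp.single w 1)
      (adeW n K q i)

/-- The action `F̂_i` of `f_i` on `W ⊗ W` via `Δf_i = 1 ⊗ f_i + f_i ⊗ q^{h_i}`: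
`F̂_i(x ⊗ y) = x ⊗ (ad f_i y) + q^{λ_i(y)}·(ad f_i x) ⊗ y` on basis vectors. -/
def Fhat (n : ℕ) (K : Type*) [Field K] (q : K) (i : ℕ) :
    Module.End K (WMod n K ⊗[K] WMod n K) :=
  TensorProduct.map LinearMap.id (adfW n K q i) +
    TensorProduct.map (adfW n K q i)
      (Finsupp.lift (WMod n K) K (WIdx n) fun w => q ^ lamW n i w • Finsupp.single w 1)

/-- The action `Ĥ_i` of `h_i` on `W ⊗ W` via `Δh_i = h_i ⊗ 1 + 1 ⊗ h_i`. -/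
def Hhat (n : ℕ) (K : Type*) [Field K] (i : ℕ) :
    Module.End K (WMod n K ⊗[K] WMod n K) :=
  TensorProduct.map (adhW n K i) LinearMap.id + TensorProduct.map LinearMap.id (adhW n K i)

/-- The symmetric `q`-number `[a]_q = (q^a − q^{−a})/(q − q^{−1})`, `a ∈ ℤ`. -/
def qint {K : Type*} [Field K] (q : K) (a : ℤ) : K := (q ^ a - q ^ (-a)) / (q - q⁻¹)

/-- The highest weight vector `s¹_{ω_1+ω_{n−1}}` of `W ⊗ W`:
`Σ_{k=2}^{n−1} q^{k−2} g_{1,k} ⊗ g_{k,n} + q^{−2} Σ_{k=1}^{n−1} ([n−k]_q/[n]_q) t_k ⊗ g_{1,n}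
 − q^{n−2} Σ_{k=1}^{n−1} ([k]_q/[n]_q) g_{1,n} ⊗ t_k`. -/
def s1W (n : ℕ) (K : Type*) [Field K] (q : K) : WMod n K ⊗[K] WMod n K :=
  (∑ k ∈ Finset.Icc 2 (n - 1), q ^ (k - 2) • (gW n K 1 k ⊗ₜ[K] gW n K k n)) +
    q ^ (-2 : ℤ) •
      (∑ k ∈ Finset.Icc 1 (n - 1),
        (qint q ((n - k : ℕ) : ℤ) / qint q (n : ℤ)) • (tW n K k ⊗ₜ[K] gW n K 1 n)) -
    q ^ (n - 2) •
      (∑ k ∈ Finset.Icc 1 (n - 1),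
        (qint q (k : ℤ) / qint q (n : ℤ)) • (gW n K 1 n ⊗ₜ[K] tW n K k))


lemma adeW_gW (n : ℕ) (K : Type*) [Field K] (q : K) (i a b : ℕ)
    (ha : 1 ≤ a) (hb : 1 ≤ b) (hab : a ≠ b) (han : a ≤ n) (hbn : b ≤ n) :
    adeW n K q i (gW n K a b) =
      if b = i ∧ a ≠ i ∧ a ≠ i + 1 then -gW n K a (i + 1)
      else if a = i + 1 ∧ b ≠ i ∧ b ≠ i + 1 then gW n K i b
      else if a = i + 1 ∧ b = i then tW n K i
      else 0 := by
  have h : 1 ≤ a ∧ 1 ≤ b ∧ a ≠ b ∧ a - 1 < n ∧ b - 1 < n := ⟨ha, hb, hab, by omega, by omega⟩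
  have ha' : a - 1 + 1 = a := by omega
  have hb' : b - 1 + 1 = b := by omega
  rw [gW, dif_pos h, adeW, Finsupp.lift_apply,
    Finsupp.sum_single_index (by simp), one_smul]
  simp only [adeB, ha', hb']
lemma adeW_tW (n : ℕ) (K : Type*) [Field K] (q : K) (i k : ℕ)
    (hk : 1 ≤ k) (hkn : k ≤ n - 1) :
    adeW n K q i (tW n K k) =
      if k = i then -((q + q⁻¹) • gW n K i (i + 1))
      else if k + 1 = i ∨ k = i + 1 then gW n K i (i + 1)
      else 0 := by
  have h : 1 ≤ k ∧ k - 1 < n - 1 := ⟨hk, by omega⟩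
  have hk' : k - 1 + 1 = k := by omega
  rw [tW, dif_pos h, adeW, Finsupp.lift_apply,
    Finsupp.sum_single_index (by simp), one_smul]
  simp only [adeB, hk']

lemma Fq_gW (n : ℕ) (K : Type*) [Field K] (q : K) (i a b : ℕ)
    (ha : 1 ≤ a) (hb : 1 ≤ b) (hab : a ≠ b) (han : a ≤ n) (hbn : b ≤ n) :
    (Finsupp.lift (WMod n K) K (WIdx n) fun w => q ^ (-lamW n i w) • Finsupp.single w 1)
        (gW n K a b) =
      q ^ (-(((if a = i then 1 else 0) - (if b = i then 1 else 0) -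
          (if a = i + 1 then 1 else 0) + (if b = i + 1 then 1 else 0)) : ℤ)) • gW n K a b := by
  have h : 1 ≤ a ∧ 1 ≤ b ∧ a ≠ b ∧ a - 1 < n ∧ b - 1 < n := ⟨ha, hb, hab, by omega, by omega⟩
  have ha' : a - 1 + 1 = a := by omega
  have hb' : b - 1 + 1 = b := by omega
  rw [gW, dif_pos h, Finsupp.lift_apply,
    Finsupp.sum_single_index (by simp), one_smul]
  simp only [lamW, ha', hb']

lemma Fq_tW (n : ℕ) (K : Type*) [Field K] (q : K) (i k : ℕ) :
    (Finsupp.lift (WMod n K) K (WIdx n) fun w => q ^ (-lamW n i w) • Finsupp.single w 1)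
        (tW n K k) = tW n K k := by
  rw [tW]
  split
  · rw [Finsupp.lift_apply, Finsupp.sum_single_index (by simp), one_smul]
    simp [lamW]
  · simp

open scoped TensorProduct in
lemma Ehat_tmul (n : ℕ) (K : Type*) [Field K] (q : K) (i : ℕ) (x y : WMod n K) :
    Ehat n K q i (x ⊗ₜ[K] y) =
      adeW n K q i x ⊗ₜ[K] y +
        ((Finsupp.lift (WMod n K) K (WIdx n) fun w => q ^ (-lamW n i w) • Finsupp.single w 1) x)
          ⊗ₜ[K] adeW n K q i y := by
  simp [Ehat, TensorProduct.map_tmul]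
section QInt
variable {K : Type*} [Field K] {q : K}

lemma hqs_ne (hq0 : q ≠ 0) (hq1 : q ^ 2 ≠ 1) : q - q⁻¹ ≠ 0 := by
  intro h
  rw [sub_eq_zero] at h
  apply hq1
  rw [pow_two]
  nth_rewrite 2 [h]
  exact mul_inv_cancel₀ hq0

lemma qint_rec (hq0 : q ≠ 0) (m : ℤ) :
    qint q (m + 1) + qint q (m - 1) = (q + q⁻¹) * qint q m := by
  unfold qint
  rw [← add_div, ← mul_div_assoc]
  congr 1
  have h1 : q ^ (m + 1) = q ^ m * q := by rw [zpow_add_one₀ hq0]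
  have h2 : q ^ (-(m + 1)) = q ^ (-m) * q⁻¹ := by
    rw [show -(m + 1) = -m + -1 by ring, zpow_add₀ hq0, zpow_neg_one]
  have h3 : q ^ (m - 1) = q ^ m * q⁻¹ := by
    rw [sub_eq_add_neg, zpow_add₀ hq0, zpow_neg_one]
  have h4 : q ^ (-(m - 1)) = q ^ (-m) * q := by
    rw [show -(m - 1) = -m + 1 by ring, zpow_add₀ hq0, zpow_one]
  rw [h1, h2, h3, h4]; ring

lemma qint_zero : qint q 0 = 0 := by simp [qint]

lemma qint_one (hqs : q - q⁻¹ ≠ 0) : qint q 1 = 1 := by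
  rw [qint, zpow_one, zpow_neg, zpow_one, div_self hqs]

lemma qint_two (hq0 : q ≠ 0) (hqs : q - q⁻¹ ≠ 0) : qint q 2 = q + q⁻¹ := by
  have := qint_rec hq0 (q := q) 1
  simp only [show (1:ℤ) + 1 = 2 by ring, show (1:ℤ) - 1 = 0 by ring, qint_zero,
    qint_one hqs, add_zero, mul_one] at this
  exact this

end QInt

set_option maxHeartbeats 2000000 in
/-- `s¹_{ω_1+ω_{n−1}}` is a highest weight vector of the `U_q(sl(n))`-module `W ⊗ W`
(of highest weight `ω_1 + ω_{n−1}`): it is killed by every `Ê_i`. -/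
theorem stmt_9 (n : ℕ) (hn : 3 ≤ n) (K : Type*) [Field K] (q : K) (hq0 : q ≠ 0)
    (hq1 : q ^ 2 ≠ 1) (hqn : qint q (n : ℤ) ≠ 0) :
    ∀ i ∈ Finset.Icc 1 (n - 1), Ehat n K q i (s1W n K q) = 0 := by
  intro i hi
  rw [Finset.mem_Icc] at hi
  obtain ⟨hi1, hi2⟩ := hi
  have hqs : q - q⁻¹ ≠ 0 := hqs_ne hq0 hq1
  have e0 : adeW n K q i (gW n K 1 n) = 0 := by
    rw [adeW_gW n K q i 1 n (by omega) (by omega) (by omega) (by omega) (by omega),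
      if_neg (by omega), if_neg (by omega), if_neg (by omega)]
  have h1 : (∑ k ∈ Finset.Icc 2 (n-1),
        q ^ (k-2) • Ehat n K q i (gW n K 1 k ⊗ₜ[K] gW n K k n))
      = ((if i ∈ Finset.Icc 2 (n-1) then -q^(i-2) else 0)
         + (if i+1 ∈ Finset.Icc 2 (n-1) then
             q^(i+1-2) * q^(-(1 + (if 1 = i then (1:ℤ) else 0))) else 0))
        • (gW n K 1 (i+1) ⊗ₜ[K] gW n K i n) := by
    rw [← Finset.sum_ite_eq' (Finset.Icc 2 (n-1)) i (fun k => -q^(k-2)),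
        ← Finset.sum_ite_eq' (Finset.Icc 2 (n-1)) (i+1)
          (fun k => q^(k-2) * q^(-(1 + (if 1 = i then (1:ℤ) else 0)))),
        ← Finset.sum_add_distrib, Finset.sum_smul]
    refine Finset.sum_congr rfl fun k hk => ?_
    rw [Finset.mem_Icc] at hk
    by_cases hk1 : k = i
    · subst hk1
      have e1 : adeW n K q k (gW n K 1 k) = -gW n K 1 (k+1) := by
        rw [adeW_gW n K q k 1 k (by omega) (by omega) (by omega) (by omega) (by omega),
          if_pos ⟨rfl, by omega, by omega⟩]
      have e2 : adeW n K q k (gW n K k n) = 0 := by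
        rw [adeW_gW n K q k k n (by omega) (by omega) (by omega) (by omega) (by omega),
          if_neg (by omega), if_neg (by omega), if_neg (by omega)]
      rw [Ehat_tmul, e1, e2, TensorProduct.tmul_zero, add_zero, if_pos rfl,
        if_neg (show ¬(k = k + 1) by omega), add_zero, TensorProduct.neg_tmul]
      module
    · by_cases hk2 : k = i + 1
      · subst hk2
        have e1 : adeW n K q i (gW n K 1 (i+1)) = 0 := by
          rw [adeW_gW n K q i 1 (i+1) (by omega) (by omega) (by omega) (by omega) (by omega),
            if_neg (by omega), if_neg (by omega), if_neg (by omega)]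
        have e2 : adeW n K q i (gW n K (i+1) n) = gW n K i n := by
          rw [adeW_gW n K q i (i+1) n (by omega) (by omega) (by omega) (by omega) (by omega),
            if_neg (by omega), if_pos ⟨rfl, by omega, by omega⟩]
        have e3 : (Finsupp.lift (WMod n K) K (WIdx n)
              fun w => q ^ (-lamW n i w) • Finsupp.single w 1) (gW n K 1 (i+1))
            = q ^ (-(1 + (if 1 = i then (1:ℤ) else 0))) • gW n K 1 (i+1) := by
          rw [Fq_gW n K q i 1 (i+1) (by omega) (by omega) (by omega) (by omega) (by omega)]
          have : (-(((if 1 = i then (1:ℤ) else 0) - (if i+1 = i then 1 else 0) -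
              (if 1 = i + 1 then 1 else 0) + (if i+1 = i + 1 then 1 else 0)) : ℤ))
              = -(1 + (if 1 = i then (1:ℤ) else 0)) := by
            rw [if_neg (show ¬(i + 1 = i) by omega), if_neg (show ¬(1 = i + 1) by omega),
              if_pos rfl]; ring
          rw [this]
        rw [Ehat_tmul, e1, e2, e3, TensorProduct.zero_tmul, zero_add,
          if_neg (show ¬(i + 1 = i) by omega), zero_add, if_pos rfl,
          ← TensorProduct.smul_tmul', smul_smul]
      · have e1 : adeW n K q i (gW n K 1 k) = 0 := by
          rw [adeW_gW n K q i 1 k (by omega) (by omega) (by omega) (by omega) (by omega),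
            if_neg (by omega), if_neg (by omega), if_neg (by omega)]
        have e2 : adeW n K q i (gW n K k n) = 0 := by
          rw [adeW_gW n K q i k n (by omega) (by omega) (by omega) (by omega) (by omega),
            if_neg (by omega), if_neg (by omega), if_neg (by omega)]
        rw [Ehat_tmul, e1, e2, TensorProduct.tmul_zero, TensorProduct.zero_tmul, add_zero,
          if_neg hk1, if_neg hk2]
        simp
  have h2 : (∑ k ∈ Finset.Icc 1 (n-1),
        (qint q ((n - k : ℕ) : ℤ) / qint q (n : ℤ)) •
          Ehat n K q i (tW n K k ⊗ₜ[K] gW n K 1 n))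
      = ((if i ∈ Finset.Icc 1 (n-1) then
            -((q + q⁻¹) * (qint q ((n - i : ℕ) : ℤ) / qint q (n : ℤ))) else 0)
         + ((if i - 1 ∈ Finset.Icc 1 (n-1) then
              qint q ((n - (i-1) : ℕ) : ℤ) / qint q (n : ℤ) else 0)
            + (if i + 1 ∈ Finset.Icc 1 (n-1) then
              qint q ((n - (i+1) : ℕ) : ℤ) / qint q (n : ℤ) else 0)))
        • (gW n K i (i+1) ⊗ₜ[K] gW n K 1 n) := by
    rw [← Finset.sum_ite_eq' (Finset.Icc 1 (n-1)) i
          (fun k => -((q + q⁻¹) * (qint q ((n - k : ℕ) : ℤ) / qint q (n : ℤ)))),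
        ← Finset.sum_ite_eq' (Finset.Icc 1 (n-1)) (i-1)
          (fun k => qint q ((n - k : ℕ) : ℤ) / qint q (n : ℤ)),
        ← Finset.sum_ite_eq' (Finset.Icc 1 (n-1)) (i+1)
          (fun k => qint q ((n - k : ℕ) : ℤ) / qint q (n : ℤ)),
        ← Finset.sum_add_distrib, ← Finset.sum_add_distrib, Finset.sum_smul]
    refine Finset.sum_congr rfl fun k hk => ?_
    rw [Finset.mem_Icc] at hk
    rw [Ehat_tmul, Fq_tW, e0, TensorProduct.tmul_zero, add_zero,
      adeW_tW n K q i k (by omega) (by omega)]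
    by_cases hk1 : k = i
    · subst hk1
      rw [if_pos rfl, if_pos rfl, if_neg (show ¬(k = k - 1) by omega),
        if_neg (show ¬(k = k + 1) by omega), add_zero, add_zero, TensorProduct.neg_tmul,
        ← TensorProduct.smul_tmul']
      module
    · by_cases hk2 : k = i - 1
      · have hki : k + 1 = i := by omega
        rw [if_neg hk1, if_pos (Or.inl hki), if_neg hk1, if_pos hk2,
          if_neg (show ¬(k = i + 1) by omega), add_zero, zero_add]
      · by_cases hk3 : k = i + 1
        · rw [if_neg hk1, if_pos (Or.inr hk3), if_neg hk1, if_neg hk2, if_pos hk3, zero_add,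
            zero_add]
        · rw [if_neg hk1, if_neg (show ¬(k + 1 = i ∨ k = i + 1) by omega), if_neg hk1,
            if_neg hk2, if_neg hk3]
          simp
  have h3 : (∑ k ∈ Finset.Icc 1 (n-1),
        (qint q (k : ℤ) / qint q (n : ℤ)) • Ehat n K q i (gW n K 1 n ⊗ₜ[K] tW n K k))
      = (q ^ (-(((if 1 = i then (1:ℤ) else 0) + (if n = i + 1 then (1:ℤ) else 0)))) *
          ((if i ∈ Finset.Icc 1 (n-1) then
              -((q + q⁻¹) * (qint q (i : ℤ) / qint q (n : ℤ))) else 0)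
           + ((if i - 1 ∈ Finset.Icc 1 (n-1) then
                qint q ((i-1 : ℕ) : ℤ) / qint q (n : ℤ) else 0)
              + (if i + 1 ∈ Finset.Icc 1 (n-1) then
                qint q ((i+1 : ℕ) : ℤ) / qint q (n : ℤ) else 0))))
        • (gW n K 1 n ⊗ₜ[K] gW n K i (i+1)) := by
    have e4 : (Finsupp.lift (WMod n K) K (WIdx n)
          fun w => q ^ (-lamW n i w) • Finsupp.single w 1) (gW n K 1 n)
        = q ^ (-(((if 1 = i then (1:ℤ) else 0) + (if n = i + 1 then (1:ℤ) else 0)))) •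
            gW n K 1 n := by
      rw [Fq_gW n K q i 1 n (by omega) (by omega) (by omega) (by omega) (by omega)]
      have : (-(((if 1 = i then (1:ℤ) else 0) - (if n = i then 1 else 0) -
          (if 1 = i + 1 then 1 else 0) + (if n = i + 1 then 1 else 0)) : ℤ))
          = -(((if 1 = i then (1:ℤ) else 0) + (if n = i + 1 then (1:ℤ) else 0))) := by
        rw [if_neg (show ¬(n = i) by omega), if_neg (show ¬(1 = i + 1) by omega)]; ring
      rw [this]
    rw [← Finset.sum_ite_eq' (Finset.Icc 1 (n-1)) i
          (fun k => -((q + q⁻¹) * (qint q (k : ℤ) / qint q (n : ℤ)))),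
        ← Finset.sum_ite_eq' (Finset.Icc 1 (n-1)) (i-1)
          (fun k => qint q (k : ℤ) / qint q (n : ℤ)),
        ← Finset.sum_ite_eq' (Finset.Icc 1 (n-1)) (i+1)
          (fun k => qint q (k : ℤ) / qint q (n : ℤ)),
        ← Finset.sum_add_distrib, ← Finset.sum_add_distrib, Finset.mul_sum, Finset.sum_smul]
    refine Finset.sum_congr rfl fun k hk => ?_
    rw [Finset.mem_Icc] at hk
    rw [Ehat_tmul, e0, e4, TensorProduct.zero_tmul, zero_add,
      adeW_tW n K q i k (by omega) (by omega), ← TensorProduct.smul_tmul']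
    by_cases hk1 : k = i
    · subst hk1
      rw [if_pos rfl, if_pos rfl, if_neg (show ¬(k = k - 1) by omega),
        if_neg (show ¬(k = k + 1) by omega), add_zero, add_zero, TensorProduct.tmul_neg,
        TensorProduct.tmul_smul]
      module
    · by_cases hk2 : k = i - 1
      · have hki : k + 1 = i := by omega
        rw [if_neg hk1, if_pos (Or.inl hki), if_neg hk1, if_pos hk2,
          if_neg (show ¬(k = i + 1) by omega), add_zero, zero_add, smul_smul, mul_comm]
      · by_cases hk3 : k = i + 1
        · rw [if_neg hk1, if_pos (Or.inr hk3), if_neg hk1, if_neg hk2, if_pos hk3, zero_add,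
            zero_add, smul_smul, mul_comm]
        · rw [if_neg hk1, if_neg (show ¬(k + 1 = i ∨ k = i + 1) by omega), if_neg hk1,
            if_neg hk2, if_neg hk3]
          simp
  have aux1 : ∀ (x y : WMod n K ⊗[K] WMod n K) (a b : K), a = 0 → b = 0 →
      a • x - b • y = 0 := by intros x y a b h h'; rw [h, h', zero_smul, zero_smul]; simp
  have aux2 : ∀ (x y : WMod n K ⊗[K] WMod n K) (a b c : K), b = 0 → a = c →
      a • x + b • y - c • x = 0 := by
    intros x y a b c h h'; rw [h, h', zero_smul, add_zero, sub_self]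
  have aux3 : ∀ (x y z : WMod n K ⊗[K] WMod n K) (a b c : K), a = 0 → b = 0 → c = 0 →
      a • x + b • y - c • z = 0 := by
    intros x y z a b c h h' h''; rw [h, h', h'', zero_smul, zero_smul, zero_smul]; simp
  rw [s1W]
  simp only [map_sub, map_add, map_smul, map_sum]
  rw [h1, h2, h3]
  by_cases hI1 : i = 1
  · subst hI1
    rw [if_neg (show (1:ℕ) ∉ Finset.Icc 2 (n-1) by rw [Finset.mem_Icc]; omega),
      if_pos (show (1+1:ℕ) ∈ Finset.Icc 2 (n-1) by rw [Finset.mem_Icc]; omega),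
      if_pos (show (1:ℕ) ∈ Finset.Icc 1 (n-1) by rw [Finset.mem_Icc]; omega),
      if_neg (show (1-1:ℕ) ∉ Finset.Icc 1 (n-1) by rw [Finset.mem_Icc]; omega),
      if_pos (show (1+1:ℕ) ∈ Finset.Icc 1 (n-1) by rw [Finset.mem_Icc]; omega),
      if_pos rfl, smul_smul, smul_smul, ← add_smul]
    refine aux1 _ _ _ _ ?_ ?_
    · have key := qint_rec (q := q) hq0 ((n:ℤ)-1)
      rw [show ((n:ℤ)-1)+1 = (n:ℤ) by ring, show ((n:ℤ)-1)-1 = (n:ℤ)-2 by ring] at key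
      rw [show ((n-1:ℕ):ℤ) = (n:ℤ)-1 by omega, show ((n-(1+1):ℕ):ℤ) = (n:ℤ)-2 by omega,
        ← mul_div_assoc, ← key, add_div, div_self hqn]
      ring
    · rw [if_neg (show ¬(n = 1+1) by omega),
        if_pos (show (1:ℕ) ∈ Finset.Icc 1 (n-1) by rw [Finset.mem_Icc]; omega),
        if_neg (show (1-1:ℕ) ∉ Finset.Icc 1 (n-1) by rw [Finset.mem_Icc]; omega),
        if_pos (show (1+1:ℕ) ∈ Finset.Icc 1 (n-1) by rw [Finset.mem_Icc]; omega),
        show ((1:ℕ):ℤ) = 1 by norm_num, show (((1:ℕ)+1:ℕ):ℤ) = 2 by norm_num,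
        qint_one hqs, qint_two hq0 hqs]
      ring
  · by_cases hI2 : i = n - 1
    · subst hI2
      have hnn : n - 1 + 1 = n := by omega
      simp only [hnn]
      rw [if_pos (show (n-1:ℕ) ∈ Finset.Icc 2 (n-1) by rw [Finset.mem_Icc]; omega),
        if_neg (show (n:ℕ) ∉ Finset.Icc 2 (n-1) by rw [Finset.mem_Icc]; omega),
        if_pos (show (n-1:ℕ) ∈ Finset.Icc 1 (n-1) by rw [Finset.mem_Icc]; omega),
        if_neg (show (n:ℕ) ∉ Finset.Icc 1 (n-1) by rw [Finset.mem_Icc]; omega),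
        if_pos (show (n-1-1:ℕ) ∈ Finset.Icc 1 (n-1) by rw [Finset.mem_Icc]; omega),
        if_neg (show ¬(1 = n - 1) by omega), smul_smul, smul_smul]
      refine aux2 _ _ _ _ _ ?_ ?_
      · rw [show (n-(n-1):ℕ) = 1 by omega, show (n-(n-1-1):ℕ) = 2 by omega,
          show ((1:ℕ):ℤ) = 1 by norm_num, show ((2:ℕ):ℤ) = 2 by norm_num,
          qint_one hqs, qint_two hq0 hqs]
        ring
      · rw [if_pos (show (n-1:ℕ) ∈ Finset.Icc 1 (n-1) by rw [Finset.mem_Icc]; omega),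
          if_pos (show (n-1-1:ℕ) ∈ Finset.Icc 1 (n-1) by rw [Finset.mem_Icc]; omega),
          if_neg (show (n:ℕ) ∉ Finset.Icc 1 (n-1) by rw [Finset.mem_Icc]; omega)]
        have key := qint_rec (q := q) hq0 ((n:ℤ)-1)
        rw [show ((n:ℤ)-1)+1 = (n:ℤ) by ring, show ((n:ℤ)-1)-1 = (n:ℤ)-2 by ring] at key
        rw [show ((n-1:ℕ):ℤ) = (n:ℤ)-1 by omega, show ((n-1-1:ℕ):ℤ) = (n:ℤ)-2 by omega,
          ← mul_div_assoc, ← key, add_div, div_self hqn]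
        have hpow : (q:K)^((n-2:ℕ)) * q^(-(0+1):ℤ) = q^(n-1-2:ℕ) := by
          rw [← zpow_natCast q (n-2), ← zpow_natCast q (n-1-2), ← zpow_add₀ hq0]
          congr 1
          omega
        rw [show (-((1 + qint q ((n:ℤ)-2) / qint q (n:ℤ)) : K) + (qint q ((n:ℤ)-2) / qint q (n:ℤ) + 0)) = -1 by ring,
          if_pos (trivial : True), mul_neg_one, mul_neg, hpow, add_zero]
    · rw [if_pos (show i ∈ Finset.Icc 2 (n-1) by rw [Finset.mem_Icc]; omega),
        if_pos (show i+1 ∈ Finset.Icc 2 (n-1) by rw [Finset.mem_Icc]; omega),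
        if_pos (show i ∈ Finset.Icc 1 (n-1) by rw [Finset.mem_Icc]; omega),
        if_pos (show i-1 ∈ Finset.Icc 1 (n-1) by rw [Finset.mem_Icc]; omega),
        if_pos (show i+1 ∈ Finset.Icc 1 (n-1) by rw [Finset.mem_Icc]; omega),
        if_neg (show ¬(1 = i) by omega), if_neg (show ¬(n = i + 1) by omega),
        smul_smul, smul_smul]
      refine aux3 _ _ _ _ _ _ ?_ ?_ ?_
      · have hpow : (q:K)^(i+1-2:ℕ) * q^(-(1+0):ℤ) = q^(i-2:ℕ) := by
          rw [← zpow_natCast q (i+1-2), ← zpow_natCast q (i-2), ← zpow_add₀ hq0]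
          congr 1
          omega
        rw [hpow]
        ring
      · have key := qint_rec (q := q) hq0 ((n:ℤ)-i)
        rw [show ((n-i:ℕ):ℤ) = (n:ℤ)-i by omega, show ((n-(i-1):ℕ):ℤ) = (n:ℤ)-i+1 by omega,
          show ((n-(i+1):ℕ):ℤ) = (n:ℤ)-i-1 by omega, ← mul_div_assoc, ← key]
        ring
      · rw [if_pos (show i ∈ Finset.Icc 1 (n-1) by rw [Finset.mem_Icc]; omega),
          if_pos (show i-1 ∈ Finset.Icc 1 (n-1) by rw [Finset.mem_Icc]; omega),
          if_pos (show i+1 ∈ Finset.Icc 1 (n-1) by rw [Finset.mem_Icc]; omega)]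
        have key := qint_rec (q := q) hq0 (i:ℤ)
        rw [show ((i-1:ℕ):ℤ) = (i:ℤ)-1 by omega, show ((i+1:ℕ):ℤ) = (i:ℤ)+1 by omega,
          ← mul_div_assoc, ← key]
        ring
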